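/- arXiv:2012.12214 — 2 statements merged into one kernel-verified Lean document; each statement's English description precedes it below -/
import Mathlib

section
/- Let E be a complex Banach space and let ρ : ℂ → (E →L[ℂ] E) be analytic at every point of D^× = {z ∈ ℂ : 0 < |z| < 1} and satisfy ρ(z·w) = ρ(z) ∘ ρ(w) for all z, w ∈ D^×. Fix k ∈ ℤ and t ∈ (0,1), and for x ∈ E set l_k x := (2πi)⁻¹ ∮_{|z|=t} z^{−k−1} (ρ(z) x) dz. Then l_k is D^×-equivariant: for every q ∈ D^× and every x ∈ E, l_k(ρ(q) x) = ρ(q)(l_k x). -/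
/-!
On the circle `|z| = t` the operators `ρ z` and `ρ q` commute, since
`ρ z ∘ ρ q = ρ (z * q) = ρ (q * z) = ρ q ∘ ρ z`. So `ρ q` can be pulled out of the integrand, and a
continuous linear map commutes with the circle integral of an integrable function; integrability
holds because `ρ` is continuous on the punctured disc.
-/

open Metric

theorem ContinuousLinearMap.circleIntegral_comp_comm {E F : Type*}
    [NormedAddCommGroup E] [NormedSpace ℂ E] [CompleteSpace E]
    [NormedAddCommGroup F] [NormedSpace ℂ F] [CompleteSpace F]
    (L : E →L[ℂ] F) {f : ℂ → E} {c : ℂ} {R : ℝ} (hf : CircleIntegrable f c R) :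
    (∮ z in C(c, R), L (f z)) = L (∮ z in C(c, R), f z) := by
  simp only [circleIntegral, ← map_smul]
  exact L.intervalIntegral_comp_comm hf.out

theorem commute_of_map_mul {M A : Type*} [CommMagma M] [Mul A] {ρ : M → A} {z w : M}
    (hzw : ρ (z * w) = ρ z * ρ w) (hwz : ρ (w * z) = ρ w * ρ z) : Commute (ρ z) (ρ w) := by
  rw [Commute, SemiconjBy, ← hzw, ← hwz, mul_comm]

theorem circleIntegrable_zpow_smul {E : Type*} [NormedAddCommGroup E] [NormedSpace ℂ E]
    {f : ℂ → E} {R : ℝ} (hR : 0 < R) (hf : ContinuousOn f (sphere 0 R)) (n : ℤ) :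
    CircleIntegrable (fun z => z ^ n • f z) 0 R := by
  refine ContinuousOn.circleIntegrable hR.le (ContinuousOn.smul ?_ hf)
  exact continuousOn_id.zpow₀ n fun z hz => Or.inl (ne_zero_of_mem_sphere hR.ne' ⟨z, hz⟩)

/-- The weight-space projection `l_k x = (2πi)⁻¹ ∮_{|z|=t} z^{-k-1} (ρ z x) dz` is
`D^×`-equivariant: `l_k (ρ q x) = ρ q (l_k x)` for all `q ∈ D^×` and `x ∈ E`. -/
theorem stmt_8 {E : Type*} [NormedAddCommGroup E] [NormedSpace ℂ E] [CompleteSpace E]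
    (ρ : ℂ → E →L[ℂ] E)
    (hρ : ∀ z : ℂ, 0 < ‖z‖ → ‖z‖ < 1 → AnalyticAt ℂ ρ z)
    (hmul : ∀ z w : ℂ, 0 < ‖z‖ → ‖z‖ < 1 →
      0 < ‖w‖ → ‖w‖ < 1 → ρ (z * w) = (ρ z).comp (ρ w))
    (k : ℤ) (t : ℝ) (ht : t ∈ Set.Ioo (0 : ℝ) 1)
    (q : ℂ) (hq0 : 0 < ‖q‖) (hq1 : ‖q‖ < 1) (x : E) :
    (2 * (Real.pi : ℂ) * Complex.I)⁻¹ • (∮ z in C(0, t), z ^ (-k - 1) • ρ z (ρ q x))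
      = ρ q ((2 * (Real.pi : ℂ) * Complex.I)⁻¹ • ∮ z in C(0, t), z ^ (-k - 1) • ρ z x) := by
  obtain ⟨ht0, ht1⟩ := ht
  have hsphere : ∀ z ∈ sphere (0 : ℂ) t, 0 < ‖z‖ ∧ ‖z‖ < 1 := fun z hz => by
    rw [mem_sphere_zero_iff_norm.mp hz]; exact ⟨ht0, ht1⟩
  have hcomm : ∀ z ∈ sphere (0 : ℂ) t, ρ z (ρ q x) = ρ q (ρ z x) := fun z hz => by
    obtain ⟨hz0, hz1⟩ := hsphere z hz
    exact DFunLike.congr_fun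
      (commute_of_map_mul (hmul z q hz0 hz1 hq0 hq1) (hmul q z hq0 hq1 hz0 hz1)).eq x
  have hcont : ContinuousOn (fun z => ρ z x) (sphere 0 t) := fun z hz =>
    ((hρ z (hsphere z hz).1 (hsphere z hz).2).continuousAt.clm_apply
      continuousAt_const).continuousWithinAt
  rw [map_smul, circleIntegral.integral_congr (g := fun z => ρ q (z ^ (-k - 1) • ρ z x)) ht0.le
    fun z hz => by rw [hcomm z hz]; exact (map_smul _ _ _).symm,
    (ρ q).circleIntegral_comp_comm (circleIntegrable_zpow_smul ht0 hcont _)]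
end

section
/- Let E be a complex Banach space, let S > 1 be a real number, and let f : ℂ → E be analytic at every point of the punctured disc A = {z ∈ ℂ : 0 < |z| < S}. Fix t ∈ (0,1) and for each k ∈ ℤ set c_k := (2πi)⁻¹ ∮_{|z|=t} z^{−k−1} f(z) dz. Then the family (c_k)_{k ∈ ℤ} is absolutely summable (Σ_{k∈ℤ} ‖c_k‖ < ∞) and Σ_{k∈ℤ} c_k = f(1); that is, the Laurent expansion of f, with coefficients computed on the circle of radius t, converges absolutely at the point 1 with sum f(1). -/
/-!
Pick a radius `r` with `1 < r < S`. The Cauchy integral formula on the annulus `t < |z| < r`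
writes `f 1` as the difference of the Cauchy integrals of `f` over the outer and inner circle.
Expanding `(z - 1)⁻¹` geometrically in `1/z` on the outer circle and in `z` on the inner one turns
these two integrals into the Laurent coefficients with `k ≥ 0` and `k < 0`; by Cauchy's theorem on
annuli the coefficients do not depend on the radius, so all of them may be computed on `|z| = t`.
The Cauchy estimates `‖c_k‖ ≤ M r^{-k}` and `‖c_{-k}‖ ≤ M t^k` give absolute convergence.
-/

open Complex Metric Set Filter Real

section

variable {E : Type*} [NormedAddCommGroup E] [NormedSpace ℂ E]

theorem closedBall_diff_ball_subset_ball_diff_singleton {α : Type*} [PseudoMetricSpace α]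
    {c : α} {r R S : ℝ} (hr : 0 < r) (hRS : R < S) :
    closedBall c R \ ball c r ⊆ ball c S \ {c} := fun _ hz =>
  ⟨closedBall_subset_ball hRS hz.1, fun h => hz.2 (h ▸ mem_ball_self hr)⟩

theorem sphere_subset_ball_diff_singleton {α : Type*} [PseudoMetricSpace α]
    {c : α} {r S : ℝ} (hr : 0 < r) (hrS : r < S) : sphere c r ⊆ ball c S \ {c} :=
  fun _ hz => ⟨sphere_subset_ball hrS hz, ne_of_mem_sphere hz hr.ne'⟩

theorem circleIntegral_eq_of_differentiableOn_annulus {g : ℂ → E} {c : ℂ} {r R : ℝ}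
    (hr : 0 < r) (hrR : r ≤ R) (hg : DifferentiableOn ℂ g (closedBall c R \ ball c r)) :
    (∮ z in C(c, R), g z) = ∮ z in C(c, r), g z :=
  circleIntegral_eq_of_differentiable_on_annulus_off_countable hr hrR countable_empty
    hg.continuousOn fun _ hz =>
      (hg.mono (sdiff_subset_sdiff ball_subset_closedBall ball_subset_closedBall)).differentiableAt
        ((isOpen_ball.sdiff isClosed_closedBall).mem_nhds hz.1)

theorem circleIntegral_dslope [CompleteSpace E] {f : ℂ → E} {c w : ℂ} {R : ℝ} (hR : 0 ≤ R)
    (hw : w ∉ sphere c R) (hf : ContinuousOn f (sphere c R)) :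
    (∮ z in C(c, R), dslope f w z)
      = (∮ z in C(c, R), (z - w)⁻¹ • f z) - (∮ z in C(c, R), (z - w)⁻¹) • f w := by
  have hinv : ContinuousOn (fun z : ℂ => (z - w)⁻¹) (sphere c R) :=
    (continuousOn_id.sub continuousOn_const).inv₀ fun z hz =>
      sub_ne_zero.2 (ne_of_mem_of_not_mem hz hw)
  rw [← circleIntegral.integral_smul_const]
  refine (circleIntegral.integral_congr hR fun z hz => ?_).trans (circleIntegral.integral_sub
    ((hinv.smul hf).circleIntegrable hR) ((hinv.smul continuousOn_const).circleIntegrable hR))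
  simp only [dslope_of_ne f (ne_of_mem_of_not_mem hz hw), slope_def_module, smul_sub]

theorem hasSum_circleIntegral_div_pow_smul {f : ℂ → E} {c w : ℂ} {R : ℝ}
    (hf : CircleIntegrable f c R) (hR : 0 ≤ R) (hw : R < ‖w‖) :
    HasSum (fun n : ℕ => ∮ z in C(c, R), ((z - c) / w) ^ n • w⁻¹ • f z)
      (∮ z in C(c, R), (c + w - z)⁻¹ • f z) := by
  have hw0 : w ≠ 0 := norm_pos_iff.1 (hR.trans_lt hw)
  have hq : R / ‖w‖ ∈ Ico (0 : ℝ) 1 :=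
    ⟨div_nonneg hR (norm_nonneg w), (div_lt_one (hR.trans_lt hw)).2 hw⟩
  refine intervalIntegral.hasSum_integral_of_dominated_convergence
      (fun n θ => ‖f (circleMap c R θ)‖ * (R * ‖w‖⁻¹ * (R / ‖w‖) ^ n))
      (fun n => ?_) (fun n => ?_) ?_ ?_ ?_
  · simp only [deriv_circleMap]
    apply_rules [MeasureTheory.AEStronglyMeasurable.smul, hf.def'.1] <;>
      apply Measurable.aestronglyMeasurable <;> fun_prop
  · refine Eventually.of_forall fun θ _ => le_of_eq ?_
    simp only [deriv_circleMap, circleMap_sub_center, div_pow, norm_smul, Complex.norm_mul,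
      norm_circleMap_zero, abs_of_nonneg hR, norm_I, mul_one, Complex.norm_div, norm_pow, norm_inv]
    ring
  · exact Eventually.of_forall fun _ _ =>
      ((summable_geometric_of_lt_one hq.1 hq.2).mul_left _).mul_left _
  · simpa only [tsum_mul_left, tsum_geometric_of_lt_one hq.1 hq.2] using
      hf.norm.mul_continuousOn continuousOn_const
  · refine Eventually.of_forall fun θ _ => HasSum.const_smul _ ?_
    have hz : ‖(circleMap c R θ - c) / w‖ < 1 := by simpa [abs_of_nonneg hR] using hq.2
    convert (hasSum_geometric_of_norm_lt_one hz).smul_const (w⁻¹ • f (circleMap c R θ))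
      using 1
    rw [smul_smul, ← mul_inv, sub_mul, div_mul_cancel₀ _ hw0, one_mul]
    ring_nf

noncomputable def laurentCoeff (f : ℂ → E) (R : ℝ) (k : ℤ) : E :=
  (2 * (π : ℂ) * I)⁻¹ • ∮ z in C(0, R), z ^ (-k - 1) • f z

theorem hasSum_zpow_smul_laurentCoeff_nat {f : ℂ → E} {w : ℂ} {R : ℝ}
    (hf : CircleIntegrable f 0 R) (hw : ‖w‖ < R) :
    HasSum (fun n : ℕ => w ^ (n : ℤ) • laurentCoeff f R n)
      ((2 * π * I : ℂ)⁻¹ • ∮ z in C(0, R), (z - w)⁻¹ • f z) := by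
  convert hasSum_cauchyPowerSeries_integral hf hw using 1
  · ext n
    simp only [cauchyPowerSeries_apply, laurentCoeff, zpow_natCast, smul_comm (w ^ n),
      ← circleIntegral.integral_smul]
    congr 2 with z
    rw [sub_zero, show -(n : ℤ) - 1 = -((n + 1 : ℕ) : ℤ) by push_cast; ring, zpow_neg,
      zpow_natCast]
    simp only [smul_smul]
    congr 1
    ring
  · rw [zero_add]

theorem hasSum_zpow_smul_laurentCoeff_neg_succ [CompleteSpace E] {f : ℂ → E} {w : ℂ} {R : ℝ}
    (hf : CircleIntegrable f 0 R) (hR : 0 ≤ R) (hw : R < ‖w‖) :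
    HasSum (fun n : ℕ => w ^ (-(n + 1 : ℤ)) • laurentCoeff f R (-(n + 1)))
      (-((2 * π * I : ℂ)⁻¹ • ∮ z in C(0, R), (z - w)⁻¹ • f z)) := by
  convert (hasSum_circleIntegral_div_pow_smul hf hR hw).const_smul (2 * π * I : ℂ)⁻¹ using 1
  · ext n
    simp only [laurentCoeff, ← circleIntegral.integral_smul]
    congr 2 with z
    rw [sub_zero, neg_neg, add_sub_cancel_right, zpow_natCast,
      show -((n : ℤ) + 1) = -((n + 1 : ℕ) : ℤ) by push_cast; ring, zpow_neg, zpow_natCast]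
    simp only [smul_smul]
    congr 1
    ring
  · rw [← neg_one_smul ℂ, smul_comm, ← circleIntegral.integral_smul]
    congr 2 with z
    rw [smul_smul, neg_one_mul, neg_inv, neg_sub, zero_add]

theorem exists_norm_zpow_smul_laurentCoeff_le {f : ℂ → E} {R : ℝ} (hR : 0 < R)
    (hf : ContinuousOn f (sphere 0 R)) (w : ℂ) :
    ∃ M, ∀ k : ℤ, ‖w ^ k • laurentCoeff f R k‖ ≤ M * (‖w‖ / R) ^ k := by
  obtain ⟨M, hM⟩ := (isCompact_sphere (0 : ℂ) R).exists_bound_of_continuousOn hf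
  refine ⟨M, fun k => ?_⟩
  have hcoeff : ‖laurentCoeff f R k‖ ≤ R * (R ^ (-k - 1) * M) := by
    refine circleIntegral.norm_two_pi_i_inv_smul_integral_le_of_norm_le_const hR.le fun z hz => ?_
    rw [norm_smul, norm_zpow, mem_sphere_zero_iff_norm.1 hz]
    exact mul_le_mul_of_nonneg_left (hM z hz) (zpow_nonneg hR.le _)
  calc ‖w ^ k • laurentCoeff f R k‖ ≤ ‖w‖ ^ k * (R * (R ^ (-k - 1) * M)) := by
        rw [norm_smul, norm_zpow]
        exact mul_le_mul_of_nonneg_left hcoeff (zpow_nonneg (norm_nonneg w) _)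
    _ = M * (‖w‖ / R) ^ k := by
        rw [div_zpow, zpow_sub_one₀ hR.ne', zpow_neg]
        field_simp

section PuncturedDisc

variable {f : ℂ → E} {S : ℝ} (hf : DifferentiableOn ℂ f (ball 0 S \ {0}))
include hf

theorem laurentCoeff_eq_of_radius {r R : ℝ} (hr : 0 < r) (hrR : r ≤ R) (hRS : R < S)
    (k : ℤ) : laurentCoeff f r k = laurentCoeff f R k := by
  refine congrArg _ (circleIntegral_eq_of_differentiableOn_annulus hr hrR ?_).symm
  refine DifferentiableOn.mono ?_ (closedBall_diff_ball_subset_ball_diff_singleton hr hRS)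
  exact (differentiableOn_zpow _ _ (Or.inl fun h => h.2 rfl)).smul hf

theorem circleIntegral_sub_inv_smul_sub_circleIntegral_sub_inv_smul [CompleteSpace E]
    {w : ℂ} {r R : ℝ} (hr : 0 < r) (hrw : r < ‖w‖) (hwR : ‖w‖ < R) (hRS : R < S) :
    (∮ z in C(0, R), (z - w)⁻¹ • f z) - (∮ z in C(0, r), (z - w)⁻¹ • f z)
      = (2 * π * I : ℂ) • f w := by
  have hU : closedBall (0 : ℂ) R \ ball 0 r ⊆ ball 0 S \ {0} :=
    closedBall_diff_ball_subset_ball_diff_singleton hr hRS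
  have hwU : w ∈ ball (0 : ℂ) S \ {0} :=
    hU ⟨mem_closedBall_zero_iff.2 hwR.le, by simpa using hrw.le⟩
  -- `dslope f w` is holomorphic on the whole annulus, and on each circle its integral is the
  -- Cauchy integral of `f` minus `f w` times the winding number of the circle around `w`.
  have hdslope : (∮ z in C(0, R), dslope f w z) = ∮ z in C(0, r), dslope f w z := by
    refine circleIntegral_eq_of_differentiableOn_annulus hr (hrw.trans hwR).le (.mono ?_ hU)
    exact (differentiableOn_dslope ((isOpen_ball.sdiff isClosed_singleton).mem_nhds hwU)).2 hf
  have hout : (∮ z in C(0, r), (z - w)⁻¹) = 0 := by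
    refine DiffContOnCl.circleIntegral_eq_zero hr.le (DifferentiableOn.diffContOnCl ?_)
    refine (differentiableOn_id.sub_const w).inv fun z hz => sub_ne_zero.2 ?_
    rintro rfl
    exact hrw.not_ge (by simpa using closure_ball_subset_closedBall hz)
  rw [circleIntegral_dslope (hr.trans hrw |>.trans hwR).le (by simp [hwR.ne])
      (hf.continuousOn.mono (sphere_subset_ball_diff_singleton (hr.trans (hrw.trans hwR)) hRS)),
    circleIntegral_dslope hr.le (by simp [hrw.ne'])
      (hf.continuousOn.mono (sphere_subset_ball_diff_singleton hr (hrw.trans (hwR.trans hRS)))),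
    circleIntegral.integral_sub_inv_of_mem_ball (mem_ball_zero_iff.2 hwR), hout, zero_smul,
    sub_zero] at hdslope
  rw [← sub_eq_zero, ← hdslope]
  abel

theorem summable_norm_zpow_smul_laurentCoeff {w : ℂ} {t : ℝ} (ht : 0 < t) (htw : t < ‖w‖)
    (hwS : ‖w‖ < S) : Summable fun k : ℤ => ‖w ^ k • laurentCoeff f t k‖ := by
  obtain ⟨r, hwr, hrS⟩ := exists_between hwS
  have hr : 0 < r := ht.trans (htw.trans hwr)
  obtain ⟨Mr, hMr⟩ := exists_norm_zpow_smul_laurentCoeff_le hr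
    (hf.continuousOn.mono (sphere_subset_ball_diff_singleton hr hrS)) w
  obtain ⟨Mt, hMt⟩ := exists_norm_zpow_smul_laurentCoeff_le ht
    (hf.continuousOn.mono (sphere_subset_ball_diff_singleton ht (htw.trans hwS))) w
  have hqr : ‖w‖ / r < 1 := (div_lt_one hr).2 hwr
  have hqt : t / ‖w‖ < 1 := (div_lt_one (ht.trans htw)).2 htw
  refine .of_nat_of_neg_add_one ?_ ?_
  · refine .of_nonneg_of_le (fun _ => norm_nonneg _) (fun n => ?_)
      ((summable_geometric_of_lt_one (by positivity) hqr).mul_left Mr)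
    simpa only [laurentCoeff_eq_of_radius hf ht (htw.trans hwr).le hrS, zpow_natCast]
      using hMr n
  · refine .of_nonneg_of_le (fun _ => norm_nonneg _) (fun n => ?_)
      (((summable_nat_add_iff 1).2 (summable_geometric_of_lt_one (by positivity) hqt)).mul_left
        Mt)
    simpa only [zpow_neg, ← Nat.cast_succ, zpow_natCast, ← inv_pow, inv_div,
      Nat.succ_eq_add_one] using hMt (-(n + 1))

theorem hasSum_zpow_smul_laurentCoeff [CompleteSpace E] {w : ℂ} {t : ℝ} (ht : 0 < t)
    (htw : t < ‖w‖) (hwS : ‖w‖ < S) :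
    HasSum (fun k : ℤ => w ^ k • laurentCoeff f t k) (f w) := by
  obtain ⟨r, hwr, hrS⟩ := exists_between hwS
  have hr : 0 < r := ht.trans (htw.trans hwr)
  have hinner := hasSum_zpow_smul_laurentCoeff_neg_succ ((hf.continuousOn.mono
    (sphere_subset_ball_diff_singleton ht (htw.trans hwS))).circleIntegrable ht.le) ht.le htw
  have houter := hasSum_zpow_smul_laurentCoeff_nat ((hf.continuousOn.mono
    (sphere_subset_ball_diff_singleton hr hrS)).circleIntegrable hr.le) hwr
  simp only [← laurentCoeff_eq_of_radius hf ht (htw.trans hwr).le hrS] at houter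
  have hsum := HasSum.of_nat_of_neg_add_one (f := fun k : ℤ => w ^ k • laurentCoeff f t k)
    houter hinner
  rwa [← sub_eq_add_neg, ← smul_sub,
    circleIntegral_sub_inv_smul_sub_circleIntegral_sub_inv_smul hf ht htw hwr hrS,
    inv_smul_smul₀ two_pi_I_ne_zero] at hsum

end PuncturedDisc

end

/-- If `f : ℂ → E` is analytic on the punctured disc `{z : 0 < |z| < S}` with `S > 1`,
then its Laurent coefficients `c_k = (2πi)⁻¹ ∮_{|z|=t} z^{-k-1} f(z) dz` (computed on a
circle of radius `t ∈ (0,1)`) are absolutely summable over `k ∈ ℤ`, with sum `f 1`. -/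
theorem stmt_11 {E : Type*} [NormedAddCommGroup E] [NormedSpace ℂ E] [CompleteSpace E]
    (S : ℝ) (hS : 1 < S) (f : ℂ → E)
    (hf : ∀ z : ℂ, 0 < ‖z‖ → ‖z‖ < S → AnalyticAt ℂ f z)
    (t : ℝ) (ht : t ∈ Set.Ioo (0 : ℝ) 1) :
    Summable (fun k : ℤ =>
        ‖(2 * (Real.pi : ℂ) * Complex.I)⁻¹ • (∮ z in C(0, t), z ^ (-k - 1) • f z)‖) ∧
      HasSum (fun k : ℤ =>
        (2 * (Real.pi : ℂ) * Complex.I)⁻¹ • (∮ z in C(0, t), z ^ (-k - 1) • f z)) (f 1) := by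
  have hd : DifferentiableOn ℂ f (ball 0 S \ {0}) := fun z hz =>
    (hf z (norm_pos_iff.2 hz.2) (mem_ball_zero_iff.1 hz.1)).differentiableAt.differentiableWithinAt
  have ht1 : t < ‖(1 : ℂ)‖ := by simpa using ht.2
  have h1S : ‖(1 : ℂ)‖ < S := by simpa using hS
  have hsum := summable_norm_zpow_smul_laurentCoeff hd ht.1 ht1 h1S
  have hval := hasSum_zpow_smul_laurentCoeff hd ht.1 ht1 h1S
  simp only [one_zpow, one_smul] at hsum hval
  exact ⟨hsum, hval⟩
end
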